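/- arXiv:2302.05520 — 2 statements merged into one kernel-verified Lean document; each statement's English description precedes it below -/
import Mathlib

section
/- Let n, t be naturals with 3t < n, let C ⊆ Fin n with |C| ≤ t be the senders corrupted in the second round, and let m : Fin n → Fin n → Option Bool give the bit that sender i delivers to receiver j (m i j = none means ⊥ or nothing). Assume: (a) every uncorrupted sender i ∉ C sends the same message to all receivers (∀ j j', m i j = m i j'); (b) every uncorrupted sender sends either 0 or ⊥, never 1 (∀ i ∉ C, ∀ j, m i j ≠ some true). If for some receiver j₀ the set {i : m i j₀ = some false} has cardinality > 2n/3, then for every receiver j, |{i : m i j = some false}| > |{i : m i j = some true}|. -/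
/-!
A receiver's count of `0`s drops, relative to `j₀`, only through the corrupted senders, and only
corrupted senders can deliver a `1`. Both deviations are bounded by `|C| ≤ t < n/3`, while `j₀`
counted more than `2n/3 > 2t` zeros.
-/

open Finset

theorem Finset.card_lt_card_of_sdiff_subset {α : Type*} [DecidableEq α] {A B C T : Finset α}
    (hAB : A \ C ⊆ B) (hTC : T ⊆ C) (hC : 2 * #C < #A) : #T < #B := by
  have hB : #A - #C ≤ #B := (le_card_sdiff C A).trans (card_le_card hAB)
  have hT : #T ≤ #C := card_le_card hTC
  omega

namespace Broadcast

variable {ι α : Type*} [Fintype ι] [DecidableEq α]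

def senders (m : ι → ι → α) (j : ι) (v : α) : Finset ι :=
  univ.filter fun i => m i j = v

theorem senders_sdiff_subset [DecidableEq ι] {m : ι → ι → α} {C : Finset ι}
    (hsame : ∀ i ∉ C, ∀ j j' : ι, m i j = m i j') (j₀ j : ι) (v : α) :
    senders m j₀ v \ C ⊆ senders m j v := by
  intro i hi
  obtain ⟨hi, hiC⟩ := mem_sdiff.1 hi
  simpa only [senders, mem_filter, mem_univ, true_and, hsame i hiC j j₀] using hi

theorem senders_subset_of_forall_ne {m : ι → ι → α} {C : Finset ι} {v : α}
    (hne : ∀ i ∉ C, ∀ j : ι, m i j ≠ v) (j : ι) : senders m j v ⊆ C := by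
  intro i hi
  unfold senders at hi
  by_contra hiC
  exact hne i hiC j (mem_filter.1 hi).2

end Broadcast

open Broadcast in
theorem graded_consensus_majority (n t : ℕ) (hnt : 3 * t < n)
    (C : Finset (Fin n)) (hC : C.card ≤ t)
    (m : Fin n → Fin n → Option Bool)
    (hsame : ∀ i ∉ C, ∀ j j' : Fin n, m i j = m i j')
    (hno1 : ∀ i ∉ C, ∀ j : Fin n, m i j ≠ some true)
    (j₀ : Fin n)
    (hj₀ : 3 * (Finset.univ.filter (fun i => m i j₀ = some false)).card > 2 * n) :
    ∀ j : Fin n,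
      (Finset.univ.filter (fun i => m i j = some false)).card >
      (Finset.univ.filter (fun i => m i j = some true)).card := by
  intro j
  have hzeros : 2 * #C < #(senders m j₀ (some false)) := by
    unfold senders
    omega
  exact card_lt_card_of_sdiff_subset (senders_sdiff_subset hsame j₀ j _)
    (senders_subset_of_forall_ne hno1 j) hzeros
end

section
/- Let n, t be naturals with 2t < n, let C ⊆ Fin n with |C| ≤ t (processors corrupted in the second round), and let b, b' be values. Suppose I, I' ⊆ Fin n with |I| ≥ n - t and |I'| ≥ n - t, and f : Fin n → Option V is a function such that: every i ∈ I \ C satisfies f(i) = some b; every i ∉ I with i ∉ C satisfies f(i) = none; every i ∈ I' \ C satisfies f(i) = some b'; and every i ∉ I' with i ∉ C satisfies f(i) = none. Then b = b'. -/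
theorem madabsm_agreement_general {V : Type*} (n t : ℕ) (hnt : 2 * t < n)
    (C : Finset (Fin n)) (hC : C.card ≤ t)
    (b b' : V) (I I' : Finset (Fin n))
    (hI : I.card ≥ n - t)
    (f : Fin n → Option V)
    (h1 : ∀ i ∈ I \ C, f i = some b)
    (h3 : ∀ i ∈ I' \ C, f i = some b')
    (h4 : ∀ i, i ∉ I' → i ∉ C → f i = none) :
    b = b' := by
  -- `#C ≤ t < n - t ≤ #I`, so `I` contains an uncorrupted sender.
  obtain ⟨i, hiI, hiC⟩ : ∃ i, i ∈ I ∧ i ∉ C :=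
    Finset.exists_mem_notMem_of_card_lt_card (by omega)
  have hb : f i = some b := h1 i (Finset.mem_sdiff.2 ⟨hiI, hiC⟩)
  have hiI' : i ∈ I' := by
    by_contra hiI'
    simpa [hb] using h4 i hiI' hiC
  have hb' : f i = some b' := h3 i (Finset.mem_sdiff.2 ⟨hiI', hiC⟩)
  exact Option.some_injective V (hb.symm.trans hb')

theorem madabsm_agreement {V : Type*} (n t : ℕ) (hnt : 2 * t < n)
    (C : Finset (Fin n)) (hC : C.card ≤ t)
    (b b' : V) (I I' : Finset (Fin n))
    (hI : I.card ≥ n - t) (hI' : I'.card ≥ n - t)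
    (f : Fin n → Option V)
    (h1 : ∀ i ∈ I \ C, f i = some b)
    (h2 : ∀ i, i ∉ I → i ∉ C → f i = none)
    (h3 : ∀ i ∈ I' \ C, f i = some b')
    (h4 : ∀ i, i ∉ I' → i ∉ C → f i = none) :
    b = b' :=
  madabsm_agreement_general n t hnt C hC b b' I I' hI f h1 h3 h4
end
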